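/- arXiv:2603.28109 — 5 statements merged into one kernel-verified Lean document; each statement's English description precedes it below -/
import Mathlib

section
/- Upper bound on TV-information by Bhattacharyya parameter: for any binary-input channel W : {0,1} → Y with uniform input, T(W) ≤ √(1 − Z(W)²), where Z(W) = Σ_{y∈Y} √(W(y|0)·W(y|1)) is the Bhattacharyya parameter and T(W) = Σ_{x,y} |(1/2)W(y|x) − (1/2)p_Y(y)| with p_Y(y) = (1/2)(W(y|0) + W(y|1)). -/
/-- TV-information is bounded by `√(1 - Z(W)²)` for any binary-input channel. -/
theorem stmt_4 {Y : Type*} [Fintype Y] (W : Bool → Y → ℝ)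
    (hW0 : ∀ x y, 0 ≤ W x y) (hW1 : ∀ x, ∑ y, W x y = 1) :
    ∑ x : Bool, ∑ y, |(1/2 : ℝ) * W x y - (1/2) * ((1/2) * (W false y + W true y))| ≤
      Real.sqrt (1 - (∑ y, Real.sqrt (W false y * W true y))^2) := by
  classical
  set a : Y → ℝ := fun y => W false y with ha
  set b : Y → ℝ := fun y => W true y with hb
  have ha0 : ∀ y, 0 ≤ a y := fun y => hW0 false y
  have hb0 : ∀ y, 0 ≤ b y := fun y => hW0 true y
  set Z : ℝ := ∑ y, Real.sqrt (a y * b y) with hZ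
  set S : ℝ := ∑ y, |a y - b y| with hS
  have hS0 : 0 ≤ S := Finset.sum_nonneg fun y _ => abs_nonneg _
  -- simplify LHS to (1/2) * S
  have hLHS : ∑ x : Bool, ∑ y, |(1/2 : ℝ) * W x y - (1/2) * ((1/2) * (W false y + W true y))|
      = (1/2) * S := by
    rw [Fintype.sum_bool, ← Finset.sum_add_distrib, hS, Finset.mul_sum]
    refine Finset.sum_congr rfl fun y _ => ?_
    have e1 : (1/2 : ℝ) * W true y - (1/2) * ((1/2) * (W false y + W true y))
        = (1/4) * (b y - a y) := by simp [ha, hb]; ring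
    have e2 : (1/2 : ℝ) * W false y - (1/2) * ((1/2) * (W false y + W true y))
        = (1/4) * (a y - b y) := by simp [ha, hb]; ring
    rw [e1, e2, abs_mul, abs_mul, abs_sub_comm (b y)]
    rw [abs_of_nonneg (by norm_num : (0:ℝ) ≤ 1/4)]
    ring
  rw [hLHS]
  -- key identities
  have hsum_a : ∑ y, a y = 1 := hW1 false
  have hsum_b : ∑ y, b y = 1 := hW1 true
  have hsq : ∀ y, Real.sqrt (a y * b y) = Real.sqrt (a y) * Real.sqrt (b y) :=
    fun y => Real.sqrt_mul (ha0 y) _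
  have h1 : ∑ y, (Real.sqrt (a y) - Real.sqrt (b y))^2 = 2 - 2*Z := by
    have : ∀ y, (Real.sqrt (a y) - Real.sqrt (b y))^2
        = a y + b y - 2 * Real.sqrt (a y * b y) := by
      intro y
      rw [hsq y, sub_sq, Real.sq_sqrt (ha0 y), Real.sq_sqrt (hb0 y)]
      ring
    simp only [this]
    rw [Finset.sum_sub_distrib, Finset.sum_add_distrib, ← Finset.mul_sum,
      hsum_a, hsum_b, ← hZ]
    ring
  have h2 : ∑ y, (Real.sqrt (a y) + Real.sqrt (b y))^2 = 2 + 2*Z := by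
    have : ∀ y, (Real.sqrt (a y) + Real.sqrt (b y))^2
        = a y + b y + 2 * Real.sqrt (a y * b y) := by
      intro y
      rw [hsq y, add_sq, Real.sq_sqrt (ha0 y), Real.sq_sqrt (hb0 y)]
      ring
    simp only [this]
    rw [Finset.sum_add_distrib, Finset.sum_add_distrib, ← Finset.mul_sum,
      hsum_a, hsum_b, ← hZ]
    ring
  -- Cauchy–Schwarz
  have hCS : S^2 ≤ (2 - 2*Z) * (2 + 2*Z) := by
    have hprod : ∀ y, |a y - b y|
        = |Real.sqrt (a y) - Real.sqrt (b y)| * (Real.sqrt (a y) + Real.sqrt (b y)) := by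
      intro y
      rw [← abs_of_nonneg (add_nonneg (Real.sqrt_nonneg (a y)) (Real.sqrt_nonneg (b y))),
        ← abs_mul]
      congr 1
      have := Real.sq_sqrt (ha0 y)
      have := Real.sq_sqrt (hb0 y)
      nlinarith [Real.sq_sqrt (ha0 y), Real.sq_sqrt (hb0 y)]
    have := Finset.sum_mul_sq_le_sq_mul_sq Finset.univ
      (fun y => |Real.sqrt (a y) - Real.sqrt (b y)|)
      (fun y => Real.sqrt (a y) + Real.sqrt (b y))
    simp only [sq_abs] at this
    calc S^2 = (∑ y, |Real.sqrt (a y) - Real.sqrt (b y)| * (Real.sqrt (a y) + Real.sqrt (b y)))^2 := by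
          rw [hS]; congr 1; exact Finset.sum_congr rfl fun y _ => hprod y
      _ ≤ (∑ y, (Real.sqrt (a y) - Real.sqrt (b y))^2) * ∑ y, (Real.sqrt (a y) + Real.sqrt (b y))^2 := this
      _ = (2 - 2*Z) * (2 + 2*Z) := by rw [h1, h2]
  have hkey : ((1/2) * S)^2 ≤ 1 - Z^2 := by nlinarith
  have := Real.sqrt_le_sqrt hkey
  rwa [Real.sqrt_sq (by positivity)] at this
end

section
/- TV-information of the minus (check) polar transform: for a binary-input memoryless symmetric channel W with uniform input, the channel W⁻ : {0,1} → Y² defined by W⁻(y₁,y₂ | u₁) = (1/2)·Σ_{u₂∈{0,1}} W(y₁ | u₁⊕u₂)·W(y₂ | u₂) satisfies T(W⁻) = T(W)², where T denotes TV-information under uniform input. -/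
/-- Uniform-input TV-information of a binary-input channel. -/
noncomputable def tvInfo {Y : Type*} [Fintype Y] (V : Bool → Y → ℝ) : ℝ :=
  ∑ u : Bool, ∑ y, |(1/2 : ℝ) * V u y - (1/2) * ((1/2) * (V false y + V true y))|

/-- Arikan's minus transform. -/
noncomputable def minusTransform {Y : Type*} (W : Bool → Y → ℝ) : Bool → Y × Y → ℝ :=
  fun u1 y => (1/2 : ℝ) * ∑ u2 : Bool, W (xor u1 u2) y.1 * W u2 y.2

lemma tvInfo_eq_half_sum {Y : Type*} [Fintype Y] (V : Bool → Y → ℝ) :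
    tvInfo V = (1/2) * ∑ y, |V true y - V false y| := by
  unfold tvInfo
  rw [Fintype.sum_bool, ← Finset.sum_add_distrib, Finset.mul_sum]
  refine Finset.sum_congr rfl fun y _ => ?_
  have e1 : (1/2:ℝ) * V true y - (1/2) * ((1/2) * (V false y + V true y))
      = (1/4) * (V true y - V false y) := by ring
  have e2 : (1/2:ℝ) * V false y - (1/2) * ((1/2) * (V false y + V true y))
      = -((1/4) * (V true y - V false y)) := by ring
  rw [e1, e2, abs_neg, abs_mul]
  rw [show |(1/4:ℝ)| = 1/4 by norm_num]
  ring

/-- For a BMS channel `W`, `T(W⁻) = T(W)²`. -/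
theorem stmt_6 {Y : Type*} [Fintype Y] (W : Bool → Y → ℝ)
    (hW0 : ∀ x y, 0 ≤ W x y) (hW1 : ∀ x, ∑ y, W x y = 1)
    (hsym : ∃ π : Y ≃ Y, ∀ y, W false y = W true (π y) ∧ W true y = W false (π y)) :
    tvInfo (minusTransform W) = (tvInfo W)^2 := by
  rw [tvInfo_eq_half_sum, tvInfo_eq_half_sum]
  have key : ∀ p : Y × Y, |minusTransform W true p - minusTransform W false p|
      = (1/2) * (|W true p.1 - W false p.1| * |W true p.2 - W false p.2|) := by
    intro p
    unfold minusTransform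
    rw [Fintype.sum_bool, Fintype.sum_bool]
    have e : (1/2:ℝ) * (W (xor true true) p.1 * W true p.2 + W (xor true false) p.1 * W false p.2)
        - (1/2) * (W (xor false true) p.1 * W true p.2 + W (xor false false) p.1 * W false p.2)
        = -((1/2) * ((W true p.1 - W false p.1) * (W true p.2 - W false p.2))) := by
      simp only [Bool.xor_self, Bool.xor_false, Bool.true_xor, Bool.false_xor, Bool.not_true]
      ring
    rw [e, abs_neg, abs_mul, abs_mul, show |(1/2:ℝ)| = 1/2 by norm_num]
  simp_rw [key]
  rw [← Finset.mul_sum, Fintype.sum_prod_type]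
  simp only [Prod.fst, Prod.snd]
  rw [← Finset.sum_mul_sum]
  ring
end

section
/- Sub-additivity of TV-information under the polar transform: for a binary-input memoryless symmetric channel W, T(W⁻) + T(W⁺) ≤ 2·T(W), where W⁻(y₁,y₂|u₁) = (1/2)Σ_{u₂} W(y₁|u₁⊕u₂)W(y₂|u₂) and W⁺(y₁,y₂,u₁|u₂) = (1/2)W(y₁|u₁⊕u₂)W(y₂|u₂), with T denoting TV-information under uniform input. -/
/-- Arikan's plus transform. -/
noncomputable def plusTransform {Y : Type*} (W : Bool → Y → ℝ) : Bool → Y × Y × Bool → ℝ :=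
  fun u2 o => (1/2 : ℝ) * W (xor o.2.2 u2) o.1 * W u2 o.2.1

lemma tvInfo_eq' {Y : Type*} [Fintype Y] (V : Bool → Y → ℝ) :
    tvInfo V = ∑ y, (1/2) * |V false y - V true y| := by
  unfold tvInfo
  rw [Fintype.sum_bool, ← Finset.sum_add_distrib]
  refine Finset.sum_congr rfl fun y _ => ?_
  rw [show ((1/2:ℝ) * V true y - 1/2*(1/2*(V false y + V true y))) = -(1/4*(V false y - V true y)) by ring,
      show ((1/2:ℝ) * V false y - 1/2*(1/2*(V false y + V true y))) = 1/4*(V false y - V true y) by ring,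
      abs_neg, abs_mul, show |(1/4:ℝ)| = 1/4 by norm_num]
  ring

lemma key_ineq' (a1 b1 a2 b2 : ℝ) (ha1 : 0 ≤ a1) (hb1 : 0 ≤ b1) (ha2 : 0 ≤ a2) (hb2 : 0 ≤ b2) :
    |a1*a2 - b1*b2| + |b1*a2 - a1*b2| + |a1 - b1| * |a2 - b2|
      ≤ (a1+b1) * |a2 - b2| + |a1 - b1| * (a2+b2) := by
  rcases abs_cases (a1*a2 - b1*b2) with ⟨h1, _⟩ | ⟨h1, _⟩ <;>
  rcases abs_cases (b1*a2 - a1*b2) with ⟨h2, _⟩ | ⟨h2, _⟩ <;>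
  rcases abs_cases (a1 - b1) with ⟨h3, _⟩ | ⟨h3, _⟩ <;>
  rcases abs_cases (a2 - b2) with ⟨h4, _⟩ | ⟨h4, _⟩ <;>
  rw [h1, h2, h3, h4] <;>
  nlinarith [mul_nonneg ha1 ha2, mul_nonneg hb1 hb2, mul_nonneg ha1 hb2, mul_nonneg hb1 ha2]

/-- For a BMS channel `W`, `T(W⁻) + T(W⁺) ≤ 2 T(W)`. -/
theorem stmt_7 {Y : Type*} [Fintype Y] (W : Bool → Y → ℝ)
    (hW0 : ∀ x y, 0 ≤ W x y) (hW1 : ∀ x, ∑ y, W x y = 1)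
    (hsym : ∃ π : Y ≃ Y, ∀ y, W false y = W true (π y) ∧ W true y = W false (π y)) :
    tvInfo (minusTransform W) + tvInfo (plusTransform W) ≤ 2 * tvInfo W := by
  classical
  set a := W false with ha
  set b := W true with hb
  have hS : ∑ y, (a y + b y) = 2 := by
    rw [Finset.sum_add_distrib, hW1, hW1]; norm_num
  rw [tvInfo_eq', tvInfo_eq', tvInfo_eq']
  have hminus : ∑ y : Y × Y, (1/2:ℝ) * |minusTransform W false y - minusTransform W true y|
      = ∑ y1, ∑ y2, (1/4:ℝ) * (|a y1 - b y1| * |a y2 - b y2|) := by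
    rw [Fintype.sum_prod_type]
    refine Finset.sum_congr rfl fun y1 _ => Finset.sum_congr rfl fun y2 _ => ?_
    have h : minusTransform W false (y1,y2) - minusTransform W true (y1,y2)
        = 1/2 * ((a y1 - b y1) * (a y2 - b y2)) := by
      simp [minusTransform, Fintype.sum_bool, ha, hb]; ring
    rw [h, abs_mul, abs_mul, show |(1/2:ℝ)| = 1/2 by norm_num]; ring
  have hplus : ∑ o : Y × Y × Bool, (1/2:ℝ) * |plusTransform W false o - plusTransform W true o|
      = ∑ y1, ∑ y2, ((1/4:ℝ) * |a y1 * a y2 - b y1 * b y2| + (1/4) * |b y1 * a y2 - a y1 * b y2|) := by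
    rw [Fintype.sum_prod_type]
    refine Finset.sum_congr rfl fun y1 _ => ?_
    rw [Fintype.sum_prod_type]
    refine Finset.sum_congr rfl fun y2 _ => ?_
    rw [Fintype.sum_bool]
    have h1 : plusTransform W false (y1,y2,true) - plusTransform W true (y1,y2,true)
        = 1/2 * (b y1 * a y2 - a y1 * b y2) := by
      simp [plusTransform, ha, hb]; ring
    have h2 : plusTransform W false (y1,y2,false) - plusTransform W true (y1,y2,false)
        = 1/2 * (a y1 * a y2 - b y1 * b y2) := by
      simp [plusTransform, ha, hb]; ring
    rw [h1, h2, abs_mul, abs_mul, show |(1/2:ℝ)| = 1/2 by norm_num]; ring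
  rw [hminus, hplus]
  calc (∑ y1, ∑ y2, (1/4:ℝ) * (|a y1 - b y1| * |a y2 - b y2|))
        + ∑ y1, ∑ y2, ((1/4:ℝ) * |a y1 * a y2 - b y1 * b y2| + (1/4) * |b y1 * a y2 - a y1 * b y2|)
      = ∑ y1, ∑ y2, ((1/4:ℝ) * (|a y1 - b y1| * |a y2 - b y2|)
          + ((1/4:ℝ) * |a y1 * a y2 - b y1 * b y2| + (1/4) * |b y1 * a y2 - a y1 * b y2|)) := by
        rw [← Finset.sum_add_distrib]
        exact Finset.sum_congr rfl fun y1 _ => by rw [← Finset.sum_add_distrib]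
    _ ≤ ∑ y1, ∑ y2, (1/4:ℝ) * ((a y1 + b y1) * |a y2 - b y2| + |a y1 - b y1| * (a y2 + b y2)) := by
        refine Finset.sum_le_sum fun y1 _ => Finset.sum_le_sum fun y2 _ => ?_
        have := key_ineq' (a y1) (b y1) (a y2) (b y2) (hW0 _ _) (hW0 _ _) (hW0 _ _) (hW0 _ _)
        linarith
    _ = (1/4:ℝ) * ((∑ y, (a y + b y)) * (∑ y, |a y - b y|)
          + (∑ y, |a y - b y|) * (∑ y, (a y + b y))) := by
        rw [Finset.sum_mul_sum, Finset.sum_mul_sum, ← Finset.sum_add_distrib, Finset.mul_sum]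
        refine Finset.sum_congr rfl fun y1 _ => ?_
        rw [← Finset.sum_add_distrib, Finset.mul_sum]
    _ = ∑ y, |a y - b y| := by rw [hS]; ring
    _ = 2 * ∑ y, 1/2 * |a y - b y| := by
        rw [Finset.mul_sum]
        exact Finset.sum_congr rfl fun y _ => by ring
end

section
/- For any binary-input memoryless symmetric channel W with uniform input, the mutual information (channel capacity) is upper bounded by the TV-information: C(W) = I(X;Y) ≤ T(W), where I is mutual information in bits, X is uniform on {0,1}, Y is the channel output, and T(W) = 2·V(p_{XY}, p_X p_Y). -/
/-!
The inequality holds already for each output letter `y`. Writing `s = W false y + W true y`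
and `p = W false y / s`, the contribution of `y` to the left side is `s (1 - h(p)) / 2` bits,
with `h` the binary entropy in bits, and to the right side `s |1 - 2p| / 2`. So it suffices
that `h` lies above the tent function `1 - |1 - 2p|`, which is the chord bound for the
concave `h` through `h 0 = 0` and `h (1/2) = 1`.
-/

open Real

lemma mul_log_two_mul (x : ℝ) : x * log (2 * x) = x * log 2 + x * log x := by
  rcases eq_or_ne x 0 with rfl | hx
  · simp
  · rw [log_mul two_ne_zero hx, mul_add]

lemma log_two_sub_binEntropy_le {p : ℝ} (hp₀ : 0 ≤ p) (hp₁ : p ≤ 1) :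
    log 2 - binEntropy p ≤ |1 - 2 * p| * log 2 := by
  wlog hp : p ≤ 2⁻¹ generalizing p
  · have := this (p := 1 - p) (by linarith) (by linarith) (by linarith)
    rwa [binEntropy_one_sub, show 1 - 2 * (1 - p) = -(1 - 2 * p) by ring, abs_neg] at this
  have chord := strictConcave_binEntropy.concaveOn.2
    (show (0 : ℝ) ∈ Set.Icc 0 1 by norm_num) (show (2⁻¹ : ℝ) ∈ Set.Icc 0 1 by norm_num)
    (show 0 ≤ 1 - 2 * p by linarith) (show 0 ≤ 2 * p by linarith) (by ring)
  simp only [smul_eq_mul, mul_zero, zero_add, binEntropy_zero, binEntropy_two_inv] at chord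
  rw [show 2 * p * 2⁻¹ = p by ring] at chord
  rw [abs_of_nonneg (by linarith)]
  linarith

lemma mul_log_two_mul_add_le {p : ℝ} (hp₀ : 0 ≤ p) (hp₁ : p ≤ 1) :
    p * log (2 * p) + (1 - p) * log (2 * (1 - p)) ≤ |1 - 2 * p| * log 2 := by
  have h := log_two_sub_binEntropy_le hp₀ hp₁
  rw [binEntropy, log_inv, log_inv] at h
  rw [mul_log_two_mul, mul_log_two_mul]
  linarith

lemma mul_logb_add_mul_logb_le_abs_sub {a b : ℝ} (ha : 0 ≤ a) (hb : 0 ≤ b) :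
    a * logb 2 (2 * a / (a + b)) + b * logb 2 (2 * b / (a + b)) ≤ |a - b| := by
  rcases (add_nonneg ha hb).eq_or_lt with hab | hab
  · obtain ⟨rfl, rfl⟩ := (add_eq_zero_iff_of_nonneg ha hb).1 hab.symm
    simp
  obtain ⟨s, p, hs, hp₀, hp₁, rfl, rfl⟩ :
      ∃ s p : ℝ, 0 < s ∧ 0 ≤ p ∧ p ≤ 1 ∧ a = s * p ∧ b = s * (1 - p) :=
    ⟨a + b, a / (a + b), hab, by positivity, (div_le_one hab).2 (by linarith),
      by field_simp, by field_simp; ring⟩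
  have h := mul_log_two_mul_add_le hp₀ hp₁
  have e₁ : 2 * (s * p) / (s * p + s * (1 - p)) = 2 * p := by field_simp; ring
  have e₂ : 2 * (s * (1 - p)) / (s * p + s * (1 - p)) = 2 * (1 - p) := by field_simp; ring
  have e₃ : |s * p - s * (1 - p)| = s * |1 - 2 * p| := by
    rw [show s * p - s * (1 - p) = s * (2 * p - 1) by ring, abs_mul, abs_of_pos hs,
      abs_sub_comm]
  rw [e₁, e₂, e₃, logb, logb]
  have hl := log_pos one_lt_two
  calc s * p * (log (2 * p) / log 2) + s * (1 - p) * (log (2 * (1 - p)) / log 2)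
      = s * (p * log (2 * p) + (1 - p) * log (2 * (1 - p))) / log 2 := by ring
    _ ≤ s * (|1 - 2 * p| * log 2) / log 2 := by gcongr
    _ = s * |1 - 2 * p| := by field_simp

theorem stmt_10_general {Y : Type*} [Fintype Y] (W : Bool → Y → ℝ)
    (hW0 : ∀ x y, 0 ≤ W x y) :
    ∑ x : Bool, ∑ y, (1/2 : ℝ) * W x y *
        Real.logb 2 (((1/2) * W x y) / ((1/2) * ((1/2) * (W false y + W true y)))) ≤
    ∑ x : Bool, ∑ y, |(1/2 : ℝ) * W x y - (1/2) * ((1/2) * (W false y + W true y))| := by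
  rw [Finset.sum_comm, Finset.sum_comm (γ := Bool)]
  refine Finset.sum_le_sum fun y _ ↦ ?_
  set a := W false y
  set b := W true y
  have key := mul_logb_add_mul_logb_le_abs_sub (hW0 false y) (hW0 true y)
  have ratio (c : ℝ) : (1/2 : ℝ) * c / ((1/2) * ((1/2) * (a + b))) = 2 * c / (a + b) := by
    rw [show (1/2 : ℝ) * ((1/2) * (a + b)) = 4⁻¹ * (a + b) by ring, div_eq_mul_inv, mul_inv,
      inv_inv]
    ring
  have dev (c d : ℝ) : |(1/2 : ℝ) * c - (1/2) * ((1/2) * (c + d))| = |c - d| / 4 := by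
    rw [show (1/2 : ℝ) * c - (1/2) * ((1/2) * (c + d)) = (c - d) / 4 by ring, abs_div,
      abs_of_pos (by norm_num : (0 : ℝ) < 4)]
  simp only [Fintype.sum_bool, ratio]
  rw [dev, add_comm a b, dev, abs_sub_comm b a, add_comm b a]
  linarith

/-- The symmetric capacity (mutual information with uniform input, in bits) of a
binary-input channel is bounded above by its TV-information. -/
theorem stmt_10 {Y : Type*} [Fintype Y] (W : Bool → Y → ℝ)
    (hW0 : ∀ x y, 0 ≤ W x y) (hW1 : ∀ x, ∑ y, W x y = 1) :
    ∑ x : Bool, ∑ y, (1/2 : ℝ) * W x y *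
        Real.logb 2 (((1/2) * W x y) / ((1/2) * ((1/2) * (W false y + W true y)))) ≤
    ∑ x : Bool, ∑ y, |(1/2 : ℝ) * W x y - (1/2) * ((1/2) * (W false y + W true y))| :=
  stmt_10_general W hW0
end

section
/- Supermartingale property of polarized TV-informations for the BEC: define the random process T_0 = 1−p and T_{m+1} = T_m² with probability 1/2 (minus transform) or T_{m+1} = 2T_m − T_m² with probability 1/2 (plus transform), independently at each step. Then (T_m) is a bounded martingale in [0,1] and converges almost surely to a {0,1}-valued random variable with E[lim T_m] = 1 − p. -/
/-!
Both transforms `t ↦ t²` and `t ↦ 2t - t²` keep `[0,1]` invariant and average to `t`: writing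
`T_{m+1} = T_m + (T_m² - T_m) ξ_{m+1}` with the fair sign `ξ_{m+1} = ±1` independent of the past,
`T` is a bounded martingale. It therefore converges a.s., and by dominated convergence the limit
keeps the mean `T_0 = 1 - p`. Each step moves `T_m` by exactly `T_m - T_m²`, and the increments of
a convergent sequence tend to `0`, so the limit is a root of `t - t²`.
-/

open MeasureTheory ProbabilityTheory Filter Topology

def becStep (b : Bool) (t : ℝ) : ℝ := if b then t ^ 2 else 2 * t - t ^ 2

def boolSign (b : Bool) : ℝ := if b then 1 else -1

lemma abs_boolSign (b : Bool) : |boolSign b| = 1 := by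
  cases b <;> simp [boolSign]

lemma norm_le_one_of_mem_Icc {t : ℝ} (ht : t ∈ Set.Icc (0 : ℝ) 1) : ‖t‖ ≤ 1 := by
  rw [Real.norm_of_nonneg ht.1]; exact ht.2

lemma mapsTo_becStep_Icc (b : Bool) :
    Set.MapsTo (becStep b) (Set.Icc (0 : ℝ) 1) (Set.Icc (0 : ℝ) 1) := by
  rintro t ⟨h0, h1⟩
  cases b <;> simp only [becStep, Bool.false_eq_true, if_true, if_false, Set.mem_Icc] <;>
    constructor <;> nlinarith

lemma becStep_eq_add_mul_boolSign (b : Bool) (t : ℝ) :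
    becStep b t = t + (t ^ 2 - t) * boolSign b := by
  cases b <;> simp only [becStep, boolSign, Bool.false_eq_true, if_true, if_false] <;> ring

lemma abs_becStep_sub (b : Bool) {t : ℝ} (ht : t ∈ Set.Icc (0 : ℝ) 1) :
    |becStep b t - t| = t - t ^ 2 := by
  rw [becStep_eq_add_mul_boolSign, add_sub_cancel_left, abs_mul, abs_boolSign, mul_one,
    abs_of_nonpos (by nlinarith [ht.1, ht.2]), neg_sub]

lemma eq_zero_of_tendsto_of_eq_abs_sub {u : ℕ → ℝ} {L : ℝ} {f : ℝ → ℝ} (hf : Continuous f)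
    (hu : Tendsto u atTop (𝓝 L)) (h : ∀ n, f (u n) = |u (n + 1) - u n|) : f L = 0 := by
  have hincr : Tendsto (fun n => |u (n + 1) - u n|) atTop (𝓝 0) := by
    simpa using ((hu.comp (tendsto_add_atTop_nat 1)).sub hu).abs
  exact tendsto_nhds_unique ((hf.tendsto L).comp hu) (hincr.congr fun n => (h n).symm)

section Probability

variable {Ω : Type*} {m0 : MeasurableSpace Ω} {μ : Measure Ω}

lemma integral_boolSign_eq_zero [IsProbabilityMeasure μ] {X : Ω → Bool} (hX : Measurable X)
    (hX_half : μ {ω | X ω = true} = 1 / 2) : ∫ ω, boolSign (X ω) ∂μ = 0 := by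
  have hfalse : μ {ω | X ω = false} = 1 / 2 := by
    have : {ω | X ω = false} = {ω | X ω = true}ᶜ := by ext; simp
    rw [this, prob_compl_eq_one_sub (measurableSet_eq_fun hX measurable_const), hX_half,
      one_div, ENNReal.one_sub_inv_two]
  have := Measure.isProbabilityMeasure_map (μ := μ) hX.aemeasurable
  rw [← integral_map hX.aemeasurable (measurable_of_countable _).aestronglyMeasurable,
    integral_fintype Integrable.of_finite]
  simp [Measure.real, Measure.map_apply hX, boolSign, Set.preimage, hfalse, hX_half]

lemma indep_comap_natural_of_not_le {ι β : Type*} [Preorder ι] [TopologicalSpace β]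
    [TopologicalSpace.MetrizableSpace β] [mβ : MeasurableSpace β] [BorelSpace β] {X : ι → Ω → β}
    (hX : ∀ i, StronglyMeasurable (X i)) (hindep : iIndepFun X μ) {i j : ι} (hji : ¬ j ≤ i) :
    Indep (MeasurableSpace.comap (X j) mβ) (Filtration.natural X hX i) μ := by
  have := indep_iSup_of_disjoint (fun k => (hX k).measurable.comap_le) hindep
    (S := {j}) (T := {k | k ≤ i}) (by simpa using hji)
  rwa [iSup_singleton] at this

lemma condExp_mul_of_indep {m₁ m₂ : MeasurableSpace Ω} (hle₁ : m₁ ≤ m0) (hle₂ : m₂ ≤ m0)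
    [SigmaFinite (μ.trim hle₂)] {H ξ : Ω → ℝ} (hH : StronglyMeasurable[m₂] H)
    (hξ : StronglyMeasurable[m₁] ξ) (hξ_int : Integrable ξ μ) (hHξ : Integrable (H * ξ) μ)
    (hindep : Indep m₁ m₂ μ) :
    μ[H * ξ | m₂] =ᵐ[μ] fun ω => H ω * ∫ ω', ξ ω' ∂μ := by
  filter_upwards [condExp_mul_of_stronglyMeasurable_left hH hHξ hξ_int,
    condExp_indep_eq hle₁ hle₂ hξ hindep] with ω hω hω'
  rw [hω, Pi.mul_apply, hω']

namespace MeasureTheory.Martingale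

variable {f : ℕ → Ω → ℝ} {ℱ : Filtration ℕ m0}

lemma integral_eq_integral_zero [IsFiniteMeasure μ] (hf : Martingale f ℱ μ) (n : ℕ) :
    ∫ ω, f n ω ∂μ = ∫ ω, f 0 ω ∂μ := by
  simpa using (hf.setIntegral_eq (Nat.zero_le n) MeasurableSet.univ).symm

lemma ae_tendsto_limitProcess_of_norm_le [IsProbabilityMeasure μ] (hf : Martingale f ℱ μ)
    {C : ℝ} (hC : ∀ n ω, ‖f n ω‖ ≤ C) :
    ∀ᵐ ω ∂μ, Tendsto (fun n => f n ω) atTop (𝓝 (ℱ.limitProcess f μ ω)) :=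
  hf.submartingale.ae_tendsto_limitProcess (R := C.toNNReal) fun n => by
    simpa [ENNReal.ofReal] using eLpNorm_le_of_ae_bound (p := 1) (μ := μ) (ae_of_all _ (hC n))

lemma integral_limitProcess_of_norm_le [IsProbabilityMeasure μ] (hf : Martingale f ℱ μ)
    {C : ℝ} (hC : ∀ n ω, ‖f n ω‖ ≤ C) :
    ∫ ω, ℱ.limitProcess f μ ω ∂μ = ∫ ω, f 0 ω ∂μ := by
  have hlim := tendsto_integral_of_dominated_convergence (fun _ => C)
    (fun n => (hf.integrable n).aestronglyMeasurable) (integrable_const _)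
    (fun n => ae_of_all _ (hC n)) (hf.ae_tendsto_limitProcess_of_norm_le hC)
  refine tendsto_nhds_unique hlim ?_
  simp_rw [hf.integral_eq_integral_zero]
  exact tendsto_const_nhds

end MeasureTheory.Martingale

section RandomIteration

variable {B : ℕ → Ω → Bool} {T : ℕ → Ω → ℝ} {c : ℝ} {g : Bool → ℝ → ℝ}

lemma mem_of_iterate_mapsTo {S : Set ℝ} (hg : ∀ b, Set.MapsTo (g b) S S) (hc : c ∈ S)
    (hT0 : ∀ ω, T 0 ω = c) (hTrec : ∀ m ω, T (m + 1) ω = g (B (m + 1) ω) (T m ω))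
    (m : ℕ) (ω : Ω) : T m ω ∈ S := by
  induction m with
  | zero => rwa [hT0]
  | succ m ih => rw [hTrec]; exact hg _ ih

lemma stronglyAdapted_natural_of_iterate (hB : ∀ m, Measurable (B m))
    (hg : ∀ b, Measurable (g b)) (hT0 : ∀ ω, T 0 ω = c)
    (hTrec : ∀ m ω, T (m + 1) ω = g (B (m + 1) ω) (T m ω)) :
    StronglyAdapted (Filtration.natural B fun m => (hB m).stronglyMeasurable) T := by
  set ℱ := Filtration.natural B fun m => (hB m).stronglyMeasurable
  have hg' : Measurable fun x : Bool × ℝ => g x.1 x.2 := measurable_from_prod_countable_right hg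
  intro m
  induction m with
  | zero => rw [funext hT0]; exact stronglyMeasurable_const
  | succ m ih =>
    have hBm : Measurable[ℱ (m + 1)] (B (m + 1)) :=
      (Filtration.stronglyAdapted_natural (β := fun _ => Bool) _ (m + 1)).measurable
    have hTm : Measurable[ℱ (m + 1)] (T m) := ih.measurable.mono (ℱ.mono m.le_succ) le_rfl
    rw [funext (hTrec m)]
    exact (hg'.comp (hBm.prodMk hTm)).stronglyMeasurable

lemma measurable_becStep (b : Bool) : Measurable (becStep b) := by
  change Measurable fun t => becStep b t
  cases b <;> simp only [becStep, Bool.false_eq_true, if_true, if_false] <;> fun_prop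

theorem martingale_natural_of_iterate_becStep [IsProbabilityMeasure μ]
    (hB : ∀ m, Measurable (B m)) (hindep : iIndepFun B μ)
    (hB_half : ∀ m, μ {ω | B m ω = true} = 1 / 2) (hT0 : ∀ ω, T 0 ω = c)
    (hTrec : ∀ m ω, T (m + 1) ω = becStep (B (m + 1) ω) (T m ω))
    (hT : ∀ m ω, T m ω ∈ Set.Icc (0 : ℝ) 1) :
    Martingale T (Filtration.natural B fun m => (hB m).stronglyMeasurable) μ := by
  set ℱ := Filtration.natural B fun m => (hB m).stronglyMeasurable
  have hadapt := stronglyAdapted_natural_of_iterate hB measurable_becStep hT0 hTrec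
  have hint (m : ℕ) : Integrable (T m) μ :=
    .of_bound ((hadapt m).mono (ℱ.le m)).aestronglyMeasurable 1
      (ae_of_all _ fun ω => norm_le_one_of_mem_Icc (hT m ω))
  refine martingale_nat hadapt hint fun m => ?_
  set H : Ω → ℝ := fun ω => T m ω ^ 2 - T m ω
  set ξ : Ω → ℝ := fun ω => boolSign (B (m + 1) ω)
  have hdecomp : T (m + 1) = T m + H * ξ := by
    ext ω; rw [hTrec, becStep_eq_add_mul_boolSign]; rfl
  have hξ : StronglyMeasurable[MeasurableSpace.comap (B (m + 1)) inferInstance] ξ :=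
    ((measurable_of_countable boolSign).comp (comap_measurable _)).stronglyMeasurable
  have hξ_int : Integrable ξ μ :=
    .of_bound ((hξ.mono (hB _).comap_le).aestronglyMeasurable) 1
      (ae_of_all _ fun ω => (abs_boolSign _).le)
  have hH : StronglyMeasurable[ℱ m] H := by
    have hTm := (hadapt m).measurable
    exact ((hTm.pow_const 2).sub hTm).stronglyMeasurable
  have hHξ : Integrable (H * ξ) μ := by
    refine hξ_int.bdd_mul (c := 1) (hH.mono (ℱ.le m)).aestronglyMeasurable
      (ae_of_all _ fun ω => ?_)
    obtain ⟨h0, h1⟩ := hT m ω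
    rw [Real.norm_eq_abs, abs_le]; constructor <;> nlinarith
  have hmean_zero : μ[H * ξ | ℱ m] =ᵐ[μ] 0 := by
    filter_upwards [condExp_mul_of_indep (hB _).comap_le (ℱ.le m) hH hξ hξ_int hHξ
      (indep_comap_natural_of_not_le _ hindep (by omega))] with ω hω
    rw [hω, integral_boolSign_eq_zero (hB _) (hB_half _), mul_zero, Pi.zero_apply]
  filter_upwards [condExp_add (hint m) hHξ (ℱ m), hmean_zero] with ω hω hω'
  rw [hdecomp, hω, Pi.add_apply, hω', Pi.zero_apply, add_zero,
    condExp_of_stronglyMeasurable (ℱ.le m) (hadapt m) (hint m)]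

end RandomIteration

end Probability

/-- The BEC TV-information process `T_0 = 1-p`, `T_{m+1} = T_m²` or `2T_m - T_m²`
with fair coin flips, is a `[0,1]`-bounded martingale (w.r.t. the natural filtration
of the coin flips) converging a.s. to a `{0,1}`-valued limit with mean `1-p`. -/
theorem stmt_18 {Ω : Type*} [m0 : MeasurableSpace Ω] (μ : Measure Ω)
    [IsProbabilityMeasure μ]
    (B : ℕ → Ω → Bool) (hmeas : ∀ m, Measurable (B m))
    (hindep : iIndepFun B μ)
    (hber : ∀ m, μ {ω | B m ω = true} = 1/2)
    (p : ℝ) (hp : p ∈ Set.Icc (0:ℝ) 1)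
    (T : ℕ → Ω → ℝ)
    (hT0 : ∀ ω, T 0 ω = 1 - p)
    (hTrec : ∀ m ω, T (m+1) ω =
      if B (m+1) ω then (T m ω)^2 else 2 * T m ω - (T m ω)^2) :
    (∀ m ω, T m ω ∈ Set.Icc (0:ℝ) 1) ∧
    Martingale T
      (MeasureTheory.Filtration.natural (fun m => B m)
        (fun m => (hmeas m).stronglyMeasurable)) μ ∧
    ∃ Tlim : Ω → ℝ,
      (∀ᵐ ω ∂μ, Tendsto (fun m => T m ω) atTop (nhds (Tlim ω))) ∧
      (∀ᵐ ω ∂μ, Tlim ω = 0 ∨ Tlim ω = 1) ∧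
      ∫ ω, Tlim ω ∂μ = 1 - p := by
  set ℱ := Filtration.natural (fun m => B m) fun m => (hmeas m).stronglyMeasurable
  have hT0_mem : 1 - p ∈ Set.Icc (0 : ℝ) 1 := ⟨by linarith [hp.2], by linarith [hp.1]⟩
  have hT := mem_of_iterate_mapsTo mapsTo_becStep_Icc hT0_mem hT0 hTrec
  have hmart := martingale_natural_of_iterate_becStep hmeas hindep hber hT0 hTrec hT
  have hnorm_le (m : ℕ) (ω : Ω) : ‖T m ω‖ ≤ 1 := norm_le_one_of_mem_Icc (hT m ω)
  have htendsto := hmart.ae_tendsto_limitProcess_of_norm_le hnorm_le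
  refine ⟨hT, hmart, ℱ.limitProcess T μ, htendsto, ?_, ?_⟩
  · filter_upwards [htendsto] with ω hω
    set L := ℱ.limitProcess T μ ω
    have hroot : L - L ^ 2 = 0 :=
      eq_zero_of_tendsto_of_eq_abs_sub (f := fun t => t - t ^ 2) (by fun_prop) hω
        fun m => by rw [hTrec]; exact (abs_becStep_sub _ (hT m ω)).symm
    exact (mul_left_eq_self₀.mp (by linear_combination -hroot)).symm
  · rw [hmart.integral_limitProcess_of_norm_le hnorm_le]
    simp [hT0]
end
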